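/- In Y_{m|n}[[u^{-1}]] the relations e_i(u − (−1)^{|i|}) d_i(u) = d_i(u) e_i(u) and e_i(u + (−1)^{|i+1|}) d_{i+1}(u) = d_{i+1}(u) e_i(u) hold for all 1 ≤ i ≤ m+n−1. -/

import Mathlib

noncomputable def inU {A : Type*} [Semiring A] (f : ℕ → A) : MvPowerSeries (Fin 2) A :=
  fun d => if d 1 = 0 then f (d 0) else 0

noncomputable def inV {A : Type*} [Semiring A] (f : ℕ → A) : MvPowerSeries (Fin 2) A :=
  fun d => if d 0 = 0 then f (d 1) else 0

noncomputable def cf2 {A : Type*} [Semiring A] (F : MvPowerSeries (Fin 2) A) (a b : ℕ) : A :=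
  MvPowerSeries.coeff (Finsupp.single 0 a + Finsupp.single 1 b) F

/-- the coefficients of g(u−c): the coefficient of u^{-n} in Σ_r (f r)(u−c)^{-r}. -/
noncomputable def shf {A : Type*} [Ring A] (c : ℤ) (f : ℕ → A) : ℕ → A :=
  fun n => ∑ r ∈ Finset.range (n+1), ((Nat.choose (n-1) (n-r) : ℤ) * c ^ (n-r)) • f r

def pnat (m i : ℕ) : ℕ := if i ≤ m then 0 else 1

/-!
Substituting `v = u − c` in `(u − v)[d(u), e(v)] = c d(u)(e(v) − e(u))` turns the factor `u − v`
into the unit `c`, leaving `[d(u), e(u − c)] = d(u) e(u − c) − d(u) e(u)`, that is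
`e(u − c) d(u) = d(u) e(u)`. On coefficients the substitution is `shfEval c`, and the one thing to
check is that it sends the left-hand side of the relation to `c` times the substituted commutator:
this is Pascal's rule for the binomial weights of `shf`, together with `[d₀, e_b] = [d_a, e₀] = 0`.
-/

open Finset PowerSeries

lemma Finset.Nat.sum_antidiagonal_ite_fst_eq_zero {M : Type*} [AddCommMonoid M] (n : ℕ)
    (h : ℕ × ℕ → M) :
    ∑ x ∈ antidiagonal n, (if x.1 = 0 then h x else 0) = h (0, n) := by
  simp [Nat.sum_antidiagonal_eq_sum_range_succ_mk]

lemma Finset.Nat.sum_antidiagonal_ite_snd_eq_zero {M : Type*} [AddCommMonoid M] (n : ℕ)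
    (h : ℕ × ℕ → M) :
    ∑ x ∈ antidiagonal n, (if x.2 = 0 then h x else 0) = h (n, 0) := by
  rw [← Nat.sum_antidiagonal_swap]
  exact Nat.sum_antidiagonal_ite_fst_eq_zero n (h ∘ Prod.swap)

lemma Finsupp.fin_two_eq (x : Fin 2 →₀ ℕ) :
    x = Finsupp.single 0 (x 0) + Finsupp.single 1 (x 1) := by
  ext i; fin_cases i <;> simp

lemma Finsupp.fin_two_ext_iff (x y : Fin 2 →₀ ℕ) : x = y ↔ x 0 = y 0 ∧ x 1 = y 1 := by
  refine ⟨fun h => h ▸ ⟨rfl, rfl⟩, fun ⟨h0, h1⟩ => ?_⟩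
  rw [x.fin_two_eq, y.fin_two_eq, h0, h1]

section Coefficients

variable {A : Type*} [Semiring A]

lemma cf2_mul (F G : MvPowerSeries (Fin 2) A) (a b : ℕ) :
    cf2 (F * G) a b =
      ∑ p ∈ antidiagonal a, ∑ q ∈ antidiagonal b, cf2 F p.1 q.1 * cf2 G p.2 q.2 := by
  rw [cf2, MvPowerSeries.coeff_mul, ← sum_product']
  refine sum_nbij' (fun x => ((x.1 0, x.2 0), (x.1 1, x.2 1)))
    (fun y => (Finsupp.single 0 y.1.1 + Finsupp.single 1 y.2.1,
      Finsupp.single 0 y.1.2 + Finsupp.single 1 y.2.2)) ?_ ?_ ?_ ?_ ?_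
  · rintro ⟨p, q⟩ h
    simp_all [Finsupp.fin_two_ext_iff]
  · rintro ⟨⟨a1, a2⟩, ⟨b1, b2⟩⟩ h
    simp_all [Finsupp.fin_two_ext_iff]
  · rintro ⟨p, q⟩ _
    simp [← Finsupp.fin_two_eq]
  · rintro ⟨⟨a1, a2⟩, ⟨b1, b2⟩⟩ _
    simp
  · rintro ⟨p, q⟩ _
    simp [cf2, ← Finsupp.fin_two_eq]

lemma cf2_inU (f : ℕ → A) (a b : ℕ) : cf2 (inU f) a b = if b = 0 then f a else 0 := by
  simp [cf2, inU, MvPowerSeries.coeff_apply]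

lemma cf2_inV (f : ℕ → A) (a b : ℕ) : cf2 (inV f) a b = if a = 0 then f b else 0 := by
  simp [cf2, inV, MvPowerSeries.coeff_apply]

lemma cf2_inU_mul_inV (f g : ℕ → A) (a b : ℕ) : cf2 (inU f * inV g) a b = f a * g b := by
  simp [cf2_mul, cf2_inU, cf2_inV, ite_mul, mul_ite, Nat.sum_antidiagonal_ite_fst_eq_zero,
    Nat.sum_antidiagonal_ite_snd_eq_zero]

lemma cf2_inV_mul_inU (f g : ℕ → A) (a b : ℕ) : cf2 (inV g * inU f) a b = g b * f a := by
  simp [cf2_mul, cf2_inU, cf2_inV, ite_mul, mul_ite, Nat.sum_antidiagonal_ite_fst_eq_zero,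
    Nat.sum_antidiagonal_ite_snd_eq_zero]

lemma cf2_inU_mul_inU (f g : ℕ → A) (a b : ℕ) :
    cf2 (inU f * inU g) a b = if b = 0 then coeff a (mk f * mk g) else 0 := by
  simp [cf2_mul, cf2_inU, ite_mul, mul_ite, Nat.sum_antidiagonal_ite_snd_eq_zero, coeff_mul]

end Coefficients

section Shift

variable {A : Type*} [Ring A] (c : ℤ)

-- The guard matters: for `r = s + 1` the weight `(s - 1).choose (s - r)` of `shf` is `1`.
def shfCoeff (s r : ℕ) : ℤ :=
  if r ≤ s then ((s - 1).choose (s - r) : ℤ) * c ^ (s - r) else 0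

lemma shfCoeff_of_lt {s r : ℕ} (h : s < r) : shfCoeff c s r = 0 := if_neg (by omega)

lemma shfCoeff_self (s : ℕ) : shfCoeff c s s = 1 := by simp [shfCoeff]

lemma shfCoeff_succ_succ (s r : ℕ) :
    shfCoeff c (s + 1) (r + 1) = shfCoeff c s r + c * shfCoeff c s (r + 1) := by
  rcases lt_trichotomy r s with h | rfl | h
  · obtain ⟨t, rfl⟩ := Nat.exists_eq_add_of_lt h
    have e1 : r + t + 1 + 1 - (r + 1) = t + 1 := by omega
    have e2 : r + t + 1 - r = t + 1 := by omega
    have e3 : r + t + 1 - (r + 1) = t := by omega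
    simp only [shfCoeff, e1, e2, e3, Nat.add_sub_cancel, Nat.choose_succ_succ',
      if_pos (by omega : r ≤ r + t + 1), if_pos (by omega : r + 1 ≤ r + t + 1),
      if_pos (by omega : r + 1 ≤ r + t + 1 + 1)]
    push_cast
    ring
  · simp [shfCoeff_self, shfCoeff_of_lt c (Nat.lt_succ_self r)]
  · simp [shfCoeff_of_lt, h, Nat.lt_succ_of_lt h]

lemma shf_eq_sum_shfCoeff (f : ℕ → A) {s M : ℕ} (hM : s < M) :
    shf c f s = ∑ r ∈ range M, shfCoeff c s r • f r := by
  rw [← sum_range_add_sum_Ico _ hM, sum_eq_zero (s := Ico _ _) fun r hr => ?_, add_zero]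
  · refine sum_congr rfl fun r hr => ?_
    rw [shfCoeff, if_pos (by simpa [Nat.lt_succ_iff] using hr)]
  · rw [shfCoeff_of_lt c (mem_Ico.1 hr).1, zero_smul]

lemma shf_zero (f : ℕ → A) : shf c f 0 = f 0 := by simp [shf]

lemma shf_comp_succ (f : ℕ → A) (hf : f 0 = 0) (s : ℕ) :
    shf c (fun r => f (r + 1)) s = shf c f (s + 1) - c • shf c f s := by
  rw [shf_eq_sum_shfCoeff c _ (Nat.lt_succ_self s), shf_eq_sum_shfCoeff c f (Nat.lt_succ_self _),
    shf_eq_sum_shfCoeff c f (by omega : s < s + 2), sum_range_succ' _ (s + 1),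
    sum_range_succ' (fun r => shfCoeff c s r • f r), hf, smul_zero, smul_zero, add_zero, add_zero,
    smul_sum, ← sum_sub_distrib]
  refine sum_congr rfl fun r _ => ?_
  rw [shfCoeff_succ_succ, add_smul, mul_smul, add_sub_cancel_right]

lemma shf_mul_left (x : A) (f : ℕ → A) (s : ℕ) : shf c (fun r => x * f r) s = x * shf c f s := by
  simp only [shf, mul_sum, mul_smul_comm]

lemma shf_mul_right (x : A) (f : ℕ → A) (s : ℕ) : shf c (fun r => f r * x) s = shf c f s * x := by
  simp only [shf, sum_mul, smul_mul_assoc]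

lemma shf_sub (f g : ℕ → A) (s : ℕ) : shf c (fun r => f r - g r) s = shf c f s - shf c g s := by
  simp only [shf, smul_sub, sum_sub_distrib]

end Shift

section Eval

variable {A : Type*} [Ring A] (c : ℤ)

/-- The coefficient of `u⁻ᴺ` in `F(u, u − c)`, where `F(u, v) = Σ F a b u⁻ᵃ v⁻ᵇ`. -/
noncomputable def shfEval (F : ℕ → ℕ → A) (N : ℕ) : A :=
  ∑ p ∈ antidiagonal N, shf c (F p.1) p.2

lemma shfEval_sub (F G : ℕ → ℕ → A) (N : ℕ) :
    shfEval c (fun a b => F a b - G a b) N = shfEval c F N - shfEval c G N := by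
  simp only [shfEval, shf_sub, sum_sub_distrib]

lemma shfEval_smul (F : ℕ → ℕ → A) (N : ℕ) :
    shfEval c (fun a b => c • F a b) N = c • shfEval c F N := by
  simp only [shfEval, shf, smul_sum, smul_comm c]

lemma shfEval_sub_shift (F : ℕ → ℕ → A) (hF0 : ∀ a, F a 0 = 0) (h0F : ∀ b, F 0 b = 0) (N : ℕ) :
    shfEval c (fun a b => F (a + 1) b - F a (b + 1)) N = c • shfEval c F N := by
  have hfst : ∑ p ∈ antidiagonal N, shf c (F (p.1 + 1)) p.2 = shfEval c F (N + 1) := by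
    simp [shfEval, Nat.sum_antidiagonal_succ, shf, h0F]
  have hsnd : ∑ p ∈ antidiagonal N, shf c (F p.1) (p.2 + 1) = shfEval c F (N + 1) := by
    rw [shfEval, Nat.sum_antidiagonal_succ', shf_zero, hF0, zero_add]
  simp only [shfEval, shf_sub, sum_sub_distrib, shf_comp_succ c _ (hF0 _)]
  rw [hfst, hsnd, ← smul_sum, sub_sub_cancel]

lemma shfEval_mul (d e : ℕ → A) (N : ℕ) :
    shfEval c (fun a b => d a * e b) N = coeff N (mk d * mk (shf c e)) := by
  simp only [shfEval, shf_mul_left, coeff_mul, coeff_mk]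

lemma shfEval_mul_rev (d e : ℕ → A) (N : ℕ) :
    shfEval c (fun a b => e b * d a) N = coeff N (mk (shf c e) * mk d) := by
  rw [coeff_mul, ← Nat.sum_antidiagonal_swap]
  simp only [shfEval, shf_mul_right, coeff_mk, Prod.fst_swap, Prod.snd_swap]

lemma shf_ite_zero (x : A) (s : ℕ) :
    shf c (fun r => if r = 0 then x else 0) s = if s = 0 then x else 0 := by
  cases s <;> simp [shf]

lemma shfEval_ite_zero (g : ℕ → A) (N : ℕ) :
    shfEval c (fun a b => if b = 0 then g a else 0) N = g N := by
  rw [shfEval, sum_eq_single (N, 0) (fun p hp hne => ?_) (by simp)]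
  · simp [shf_ite_zero]
  · have : p.2 ≠ 0 := fun h => hne (Prod.ext (by simpa [h] using mem_antidiagonal.1 hp) h)
    simp [shf_ite_zero, this]

end Eval

section Relation

variable {A : Type*} [Ring A] {c : ℤ}

lemma cf2_sub (F G : MvPowerSeries (Fin 2) A) (a b : ℕ) :
    cf2 (F - G) a b = cf2 F a b - cf2 G a b :=
  map_sub _ F G

lemma lie_sub_lie_of_cf2 {d e : ℕ → A}
    (h : ∀ a b : ℕ,
      cf2 (inU d * inV e - inV e * inU d) (a + 1) b -
          cf2 (inU d * inV e - inV e * inU d) a (b + 1) =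
        c • cf2 (inU d * (inV e - inU e)) a b)
    (a b : ℕ) :
    ⁅d (a + 1), e b⁆ - ⁅d a, e (b + 1)⁆ =
      c • (d a * e b - if b = 0 then coeff a (mk d * mk e) else 0) := by
  simpa [cf2_sub, mul_sub, cf2_inU_mul_inV, cf2_inV_mul_inU, cf2_inU_mul_inU, Ring.lie_def]
    using h a b

theorem mk_shf_mul_mk_eq_of_lie (hc : IsUnit c) {d e : ℕ → A} (hd0 : d 0 = 1) (he0 : e 0 = 0)
    (hrel : ∀ a b : ℕ, ⁅d (a + 1), e b⁆ - ⁅d a, e (b + 1)⁆ =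
      c • (d a * e b - if b = 0 then coeff a (mk d * mk e) else 0)) :
    mk (shf c e) * mk d = mk d * mk e := by
  ext N
  have hlie : shfEval c (fun a b => ⁅d a, e b⁆) N =
      coeff N (mk d * mk (shf c e)) - coeff N (mk (shf c e) * mk d) := by
    simp only [Ring.lie_def, shfEval_sub, shfEval_mul, shfEval_mul_rev]
  have key : c • shfEval c (fun a b => ⁅d a, e b⁆) N =
      c • (coeff N (mk d * mk (shf c e)) - coeff N (mk d * mk e)) := by
    rw [← shfEval_sub_shift c _ (by simp [he0, Ring.lie_def]) (by simp [hd0, Ring.lie_def])]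
    simp only [hrel, shfEval_smul, shfEval_sub, shfEval_mul, shfEval_ite_zero]
  rwa [hc.smul_left_cancel, hlie, sub_right_inj] at key

end Relation

theorem e_shift_d_relations_general
    (m : ℕ) (A : Type*) [Ring A]
    (i : ℕ)
    (d dnext e : ℕ → A) (hd0 : d 0 = 1) (hdnext0 : dnext 0 = 1) (he0 : e 0 = 0)
    -- (u−v)[d_i(u), e_i(v)] = (−1)^{|i|} d_i(u)(e_i(v) − e_i(u))
    (hrel1 : ∀ a b : ℕ,
      cf2 (inU d * inV e - inV e * inU d) (a+1) b -
        cf2 (inU d * inV e - inV e * inU d) a (b+1) =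
      ((-1 : ℤ) ^ pnat m i) • cf2 (inU d * (inV e - inU e)) a b)
    -- (u−v)[d_{i+1}(u), e_i(v)] = −(−1)^{|i+1|} d_{i+1}(u)(e_i(v) − e_i(u))
    (hrel2 : ∀ a b : ℕ,
      cf2 (inU dnext * inV e - inV e * inU dnext) (a+1) b -
        cf2 (inU dnext * inV e - inV e * inU dnext) a (b+1) =
      -((-1 : ℤ) ^ pnat m (i+1)) • cf2 (inU dnext * (inV e - inU e)) a b) :
    PowerSeries.mk (shf ((-1 : ℤ) ^ pnat m i) e) * PowerSeries.mk d =
        PowerSeries.mk d * PowerSeries.mk e ∧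
    PowerSeries.mk (shf (-((-1 : ℤ) ^ pnat m (i+1))) e) * PowerSeries.mk dnext =
        PowerSeries.mk dnext * PowerSeries.mk e := by
  have hc : ∀ j, IsUnit ((-1 : ℤ) ^ j) := fun j => isUnit_neg_one.pow j
  exact ⟨mk_shf_mul_mk_eq_of_lie (hc _) hd0 he0 (lie_sub_lie_of_cf2 hrel1),
    mk_shf_mul_mk_eq_of_lie (hc _).neg hdnext0 he0 (lie_sub_lie_of_cf2 hrel2)⟩

/-- in Y_{m|n}[[u^{-1}]] the relations
e_i(u − (−1)^{|i|}) d_i(u) = d_i(u) e_i(u)  and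
e_i(u + (−1)^{|i+1|}) d_{i+1}(u) = d_{i+1}(u) e_i(u)
hold for all 1 ≤ i ≤ m+n−1, given the commutation relations
(u−v)[d_i(u), e_j(v)] = (−1)^{|i|}(δ_{ij} − δ_{i,j+1}) d_i(u)(e_j(v) − e_j(u))
specialized to (i,j) = (i,i) and (i+1,i) (expressed coefficientwise). -/
theorem e_shift_d_relations
    (k : Type*) [Field k] (p : ℕ) [CharP k p] (hp : 0 < p)
    (m n : ℕ) (A : Type*) [Ring A] [Algebra k A]
    (i : ℕ) (hi1 : 1 ≤ i) (hi2 : i ≤ m + n - 1)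
    (d dnext e : ℕ → A) (hd0 : d 0 = 1) (hdnext0 : dnext 0 = 1) (he0 : e 0 = 0)
    -- (u−v)[d_i(u), e_i(v)] = (−1)^{|i|} d_i(u)(e_i(v) − e_i(u))
    (hrel1 : ∀ a b : ℕ,
      cf2 (inU d * inV e - inV e * inU d) (a+1) b -
        cf2 (inU d * inV e - inV e * inU d) a (b+1) =
      ((-1 : ℤ) ^ pnat m i) • cf2 (inU d * (inV e - inU e)) a b)
    -- (u−v)[d_{i+1}(u), e_i(v)] = −(−1)^{|i+1|} d_{i+1}(u)(e_i(v) − e_i(u))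
    (hrel2 : ∀ a b : ℕ,
      cf2 (inU dnext * inV e - inV e * inU dnext) (a+1) b -
        cf2 (inU dnext * inV e - inV e * inU dnext) a (b+1) =
      -((-1 : ℤ) ^ pnat m (i+1)) • cf2 (inU dnext * (inV e - inU e)) a b) :
    PowerSeries.mk (shf ((-1 : ℤ) ^ pnat m i) e) * PowerSeries.mk d =
        PowerSeries.mk d * PowerSeries.mk e ∧
    PowerSeries.mk (shf (-((-1 : ℤ) ^ pnat m (i+1))) e) * PowerSeries.mk dnext =
        PowerSeries.mk dnext * PowerSeries.mk e :=
  e_shift_d_relations_general m A i d dnext e hd0 hdnext0 he0 hrel1 hrel2
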